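/- Let f, g : (0,∞) → ℝ be continuous transformable functions with constants c_f, c_g. If T[f](z) = T[g](z) for all real z > √(max(c_f, c_g)), then f = g. -/

import Mathlib

open MeasureTheory Filter Set Asymptotics Real

/-- The Gaussian-kernel integral transform of `f`, evaluated at a real point `z`. -/
noncomputable def gaussTransform (f : ℝ → ℝ) (z : ℝ) : ℝ :=
  (1 / Real.sqrt (2 * π)) * ∫ σ in Set.Ioi (0:ℝ), (f σ / σ) * Real.exp (-z ^ 2 / (2 * σ ^ 2))


lemma my_weierstrass (F : ℝ → ℝ) (hF : ContinuousOn F (Set.Icc 0 1)) {ε : ℝ} (hε : 0 < ε) :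
    ∃ p : Polynomial ℝ, ∀ x ∈ Set.Icc (0:ℝ) 1, |F x - p.eval x| ≤ ε := by
  set Fc : C(Set.Icc (0:ℝ) 1, ℝ) := ⟨fun x => F x, (continuousOn_iff_continuous_restrict.1 hF)⟩
  have hmem : Fc ∈ (polynomialFunctions (Set.Icc (0:ℝ) 1)).topologicalClosure := by
    rw [polynomialFunctions_closure_eq_top]; trivial
  have hclo : Fc ∈ closure (polynomialFunctions (Set.Icc (0:ℝ) 1) : Set C(Set.Icc (0:ℝ) 1, ℝ)) :=
    hmem
  rw [Metric.mem_closure_iff] at hclo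
  obtain ⟨q, hq, hdist⟩ := hclo ε hε
  rw [polynomialFunctions_coe] at hq
  obtain ⟨p, rfl⟩ := hq
  refine ⟨p, fun x hx => ?_⟩
  have := ContinuousMap.dist_apply_le_dist (f := Fc) (g := Polynomial.toContinuousMapOnAlgHom _ p) ⟨x, hx⟩
  have h2 : dist (F x) (p.eval x) ≤ dist Fc (Polynomial.toContinuousMapOnAlgHom _ p) := by
    exact this
  rw [Real.dist_eq] at h2
  exact h2.trans hdist.le

section Moment
variable {ψ : ℝ → ℝ}

/-- continuous F times ψ is integrable on (0,1) -/
lemma contMul_integrable (hint : IntegrableOn ψ (Set.Ioo 0 1)) {F : ℝ → ℝ}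
    (hF : ContinuousOn F (Set.Icc 0 1)) :
    IntegrableOn (fun s => F s * ψ s) (Set.Ioo 0 1) := by
  obtain ⟨C, hC⟩ := (isCompact_Icc (a := (0:ℝ)) (b := 1)).exists_bound_of_continuousOn hF
  refine Integrable.mono' (hint.norm.const_mul C) ?_ ?_
  · exact ((hF.mono Set.Ioo_subset_Icc_self).aestronglyMeasurable measurableSet_Ioo).mul
      hint.aestronglyMeasurable
  · filter_upwards [ae_restrict_mem measurableSet_Ioo] with s hs
    have h1 : |F s| ≤ C := hC s (Set.Ioo_subset_Icc_self hs)
    have : |F s * ψ s| = |F s| * |ψ s| := abs_mul _ _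
    calc ‖F s * ψ s‖ = |F s| * |ψ s| := this
      _ ≤ C * |ψ s| := by
          exact mul_le_mul_of_nonneg_right h1 (abs_nonneg _)
      _ = C * ‖ψ s‖ := rfl

lemma contMul_integral_zero (hint : IntegrableOn ψ (Set.Ioo 0 1))
    (hm : ∀ n : ℕ, ∫ s in Set.Ioo (0:ℝ) 1, s ^ n * ψ s = 0) {F : ℝ → ℝ}
    (hF : ContinuousOn F (Set.Icc 0 1)) :
    ∫ s in Set.Ioo (0:ℝ) 1, F s * ψ s = 0 := by
  -- first, polynomials
  have hpoly : ∀ p : Polynomial ℝ, ∫ s in Set.Ioo (0:ℝ) 1, p.eval s * ψ s = 0 := by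
    intro p
    have hrw : ∀ s : ℝ, p.eval s * ψ s
        = ∑ i ∈ Finset.range (p.natDegree + 1), p.coeff i * (s ^ i * ψ s) := by
      intro s
      rw [Polynomial.eval_eq_sum_range, Finset.sum_mul]
      exact Finset.sum_congr rfl fun i _ => by ring
    simp_rw [hrw]
    rw [integral_finset_sum]
    · refine Finset.sum_eq_zero fun i _ => ?_
      rw [integral_const_mul, hm i, mul_zero]
    · intro i _
      exact ((contMul_integrable hint (Polynomial.continuous (Polynomial.X ^ i)).continuousOn).congr_fun
        (fun s _ => by simp) measurableSet_Ioo).const_mul _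
  -- now general continuous F
  have hK : (0:ℝ) ≤ ∫ s in Set.Ioo (0:ℝ) 1, |ψ s| :=
    integral_nonneg fun s => abs_nonneg _
  set K := ∫ s in Set.Ioo (0:ℝ) 1, |ψ s| with hKdef
  have key : ∀ ε : ℝ, 0 < ε → |∫ s in Set.Ioo (0:ℝ) 1, F s * ψ s| ≤ ε * (K + 1) := by
    intro ε hε
    obtain ⟨p, hp⟩ := my_weierstrass F hF hε
    have hFi := contMul_integrable hint hF
    have hpi := contMul_integrable hint (p.continuous.continuousOn)
    have hsub : (∫ s in Set.Ioo (0:ℝ) 1, (F s - p.eval s) * ψ s)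
        = ∫ s in Set.Ioo (0:ℝ) 1, F s * ψ s := by
      rw [show (fun s => (F s - p.eval s) * ψ s) = fun s => F s * ψ s - p.eval s * ψ s from
        funext fun s => by ring, integral_sub hFi hpi, hpoly p, sub_zero]
    rw [← hsub]
    calc |∫ s in Set.Ioo (0:ℝ) 1, (F s - p.eval s) * ψ s|
        ≤ ∫ s in Set.Ioo (0:ℝ) 1, |F s - p.eval s| * |ψ s| := by
          simpa [Real.norm_eq_abs, abs_mul] using
            norm_integral_le_integral_norm (fun s => (F s - p.eval s) * ψ s)
              (μ := volume.restrict (Set.Ioo 0 1))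
      _ ≤ ∫ s in Set.Ioo (0:ℝ) 1, ε * |ψ s| := by
          refine setIntegral_mono_on (IntegrableOn.congr_fun (contMul_integrable hint
            (hF.sub p.continuous.continuousOn)).abs
            (fun s _ => (abs_mul _ _)) measurableSet_Ioo) (hint.abs.const_mul ε)
            measurableSet_Ioo fun s hs => ?_
          exact mul_le_mul_of_nonneg_right (hp s (Set.Ioo_subset_Icc_self hs)) (abs_nonneg _)
      _ = ε * K := by rw [integral_const_mul]
      _ ≤ ε * (K + 1) := by nlinarith
  by_contra hne
  have habs : 0 < |∫ s in Set.Ioo (0:ℝ) 1, F s * ψ s| := abs_pos.mpr hne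
  have := key (|∫ s in Set.Ioo (0:ℝ) 1, F s * ψ s| / (2 * (K + 1))) (by positivity)
  have hKp : (0:ℝ) < K + 1 := by linarith
  have h2 : (K + 1) / (2 * (K + 1)) = 1 / 2 := by field_simp
  rw [div_mul_eq_mul_div, mul_div_assoc, h2] at this
  nlinarith [this]

end Moment

lemma moment_zero_aux (hint : IntegrableOn ψ (Set.Ioo 0 1))
    (hcont : ContinuousOn ψ (Set.Ioo 0 1))
    (hm : ∀ n : ℕ, ∫ s in Set.Ioo (0:ℝ) 1, s ^ n * ψ s = 0)
    {x₀ : ℝ} (hx₀ : x₀ ∈ Set.Ioo (0:ℝ) 1) : ¬ (0 < ψ x₀) := by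
  intro hpos
  set c := ψ x₀ with hc
  have hCA : ContinuousAt ψ x₀ := hcont.continuousAt (isOpen_Ioo.mem_nhds hx₀)
  obtain ⟨δ1, hδ1, hb1⟩ := Metric.continuousAt_iff.1 hCA (c / 2) (by linarith)
  obtain ⟨δ2, hδ2, hb2⟩ := Metric.isOpen_iff.1 isOpen_Ioo x₀ hx₀
  set δ := min δ1 δ2 / 2 with hδdef
  have hδ : 0 < δ := by positivity
  have hδlt : δ < min δ1 δ2 := by
    have h := lt_min hδ1 hδ2
    rw [hδdef]; linarith
  have hJsub : Set.Icc (x₀ - δ) (x₀ + δ) ⊆ Set.Ioo (0:ℝ) 1 := by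
    intro y hy
    apply hb2
    rw [Metric.mem_ball, Real.dist_eq]
    have h1 : |y - x₀| ≤ δ := abs_sub_le_iff.2 ⟨by linarith [hy.2], by linarith [hy.1]⟩
    exact lt_of_le_of_lt h1 (lt_of_lt_of_le hδlt (min_le_right _ _))
  have hψJ : ∀ y ∈ Set.Icc (x₀ - δ) (x₀ + δ), c / 2 ≤ ψ y := by
    intro y hy
    have h1 : |y - x₀| ≤ δ := abs_sub_le_iff.2 ⟨by linarith [hy.2], by linarith [hy.1]⟩
    have h2 := hb1 (show dist y x₀ < δ1 from by
      rw [Real.dist_eq]; exact lt_of_le_of_lt h1 (lt_of_lt_of_le hδlt (min_le_left _ _)))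
    rw [Real.dist_eq] at h2
    have h3 := abs_sub_lt_iff.1 h2
    linarith [h3.1]
  set φb : ℝ → ℝ := fun y => max 0 (1 - |y - x₀| / δ) with hφb
  have hφbc : Continuous φb := by
    apply continuous_const.max
    fun_prop
  have hφb0 : ∀ y, 0 ≤ φb y := fun y => le_max_left _ _
  have hφbout : ∀ y, δ ≤ |y - x₀| → φb y = 0 := by
    intro y hy
    apply max_eq_left
    rw [sub_nonpos, le_div_iff₀ hδ]
    linarith
  have hφbhalf : ∀ y, |y - x₀| ≤ δ/2 → (1:ℝ)/2 ≤ φb y := by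
    intro y hy
    refine le_max_of_le_right ?_
    have h : |y - x₀|/δ ≤ 1/2 := by rw [div_le_iff₀ hδ]; linarith
    linarith
  have h0 : ∫ s in Set.Ioo (0:ℝ) 1, φb s * ψ s = 0 :=
    contMul_integral_zero hint hm hφbc.continuousOn
  have hnn : ∀ y ∈ Set.Ioo (0:ℝ) 1, 0 ≤ φb y * ψ y := by
    intro y _
    rcases le_or_gt δ |y - x₀| with h | h
    · rw [hφbout y h, zero_mul]
    · have h4 := abs_sub_lt_iff.1 h
      have hyJ : y ∈ Set.Icc (x₀ - δ) (x₀ + δ) :=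
        ⟨by linarith [h4.1, h4.2], by linarith [h4.1, h4.2]⟩
      exact mul_nonneg (hφb0 y) (le_trans (by linarith) (hψJ y hyJ))
  have hJ2sub : Set.Icc (x₀ - δ/2) (x₀ + δ/2) ⊆ Set.Ioo (0:ℝ) 1 := by
    intro y hy; exact hJsub ⟨by linarith [hy.1], by linarith [hy.2]⟩
  have hfi : IntegrableOn (fun s => φb s * ψ s) (Set.Ioo 0 1) :=
    contMul_integrable hint hφbc.continuousOn
  have hlow : c/4 * (volume (Set.Icc (x₀ - δ/2) (x₀ + δ/2))).toReal
      ≤ ∫ s in Set.Icc (x₀ - δ/2) (x₀ + δ/2), φb s * ψ s := by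
    apply setIntegral_ge_of_const_le_real measurableSet_Icc
      (by rw [Real.volume_Icc]; exact ENNReal.ofReal_ne_top)
    · intro y hy
      have h1 : |y - x₀| ≤ δ/2 := abs_sub_le_iff.2 ⟨by linarith [hy.2], by linarith [hy.1]⟩
      have h2 := hφbhalf y h1
      have h3 := hψJ y ⟨by linarith [hy.1], by linarith [hy.2]⟩
      calc c/4 = (1/2) * (c/2) := by ring
        _ ≤ φb y * ψ y := mul_le_mul h2 h3 (by linarith) (hφb0 y)
    · exact hfi.mono_set hJ2sub
  have hmono : ∫ s in Set.Icc (x₀ - δ/2) (x₀ + δ/2), φb s * ψ s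
      ≤ ∫ s in Set.Ioo (0:ℝ) 1, φb s * ψ s := by
    apply setIntegral_mono_set hfi
    · filter_upwards [ae_restrict_mem measurableSet_Ioo] with y hy using hnn y hy
    · exact HasSubset.Subset.eventuallyLE hJ2sub
  rw [h0] at hmono
  have hvol : (volume (Set.Icc (x₀ - δ/2) (x₀ + δ/2))).toReal = δ := by
    rw [Real.volume_Icc, ENNReal.toReal_ofReal (by linarith)]; ring
  rw [hvol] at hlow
  nlinarith

lemma moment_zero (hint : IntegrableOn ψ (Set.Ioo 0 1))
    (hcont : ContinuousOn ψ (Set.Ioo 0 1))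
    (hm : ∀ n : ℕ, ∫ s in Set.Ioo (0:ℝ) 1, s ^ n * ψ s = 0) :
    ∀ x ∈ Set.Ioo (0:ℝ) 1, ψ x = 0 := by
  intro x hx
  have h1 := moment_zero_aux hint hcont hm hx
  have h2 := moment_zero_aux (ψ := fun s => -ψ s) hint.neg hcont.neg
    (fun n => by simp only [mul_neg, integral_neg, hm n, neg_zero]) hx
  simp only [Left.nonneg_neg_iff, not_lt] at h1 h2
  simp only [not_lt, neg_nonpos] at h2
  linarith


/-- substitution map (0,1) → (0,∞), s ↦ 1/√(-2 log s) -/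
noncomputable def gtPhi (s : ℝ) : ℝ := (Real.sqrt (-2 * Real.log s))⁻¹

noncomputable def gtPhi' (s : ℝ) : ℝ :=
  1 / (s * (-2 * Real.log s) * Real.sqrt (-2 * Real.log s))

lemma gtPhi_facts {s : ℝ} (hs : s ∈ Set.Ioo (0:ℝ) 1) :
    0 < -2 * Real.log s ∧ 0 < Real.sqrt (-2 * Real.log s) ∧ 0 < gtPhi s := by
  have h1 : Real.log s < 0 := Real.log_neg hs.1 hs.2
  have h2 : 0 < -2 * Real.log s := by linarith
  exact ⟨h2, Real.sqrt_pos.2 h2, inv_pos.2 (Real.sqrt_pos.2 h2)⟩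

lemma gtPhi_hasDeriv {s : ℝ} (hs : s ∈ Set.Ioo (0:ℝ) 1) :
    HasDerivAt gtPhi (gtPhi' s) s := by
  obtain ⟨hL, hsqL, hφ⟩ := gtPhi_facts hs
  have hlog : HasDerivAt Real.log s⁻¹ s := Real.hasDerivAt_log (ne_of_gt hs.1)
  have hLd : HasDerivAt (fun s => -2 * Real.log s) (-2 * s⁻¹) s := hlog.const_mul (-2)
  have hsq : HasDerivAt (fun s => Real.sqrt (-2 * Real.log s))
      (1 / (2 * Real.sqrt (-2 * Real.log s)) * (-2 * s⁻¹)) s :=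
    (Real.hasDerivAt_sqrt (ne_of_gt hL)).comp s hLd
  have hinv : HasDerivAt gtPhi _ s := hsq.inv (ne_of_gt hsqL)
  convert hinv using 1
  rw [gtPhi', Real.sq_sqrt hL.le]
  field_simp

lemma gtPhi_leftInv {s : ℝ} (hs : s ∈ Set.Ioo (0:ℝ) 1) :
    Real.exp (-(1 / (2 * (gtPhi s) ^ 2))) = s := by
  obtain ⟨hL, hsqL, hφ⟩ := gtPhi_facts hs
  have h1 : (gtPhi s) ^ 2 = (-2 * Real.log s)⁻¹ := by
    rw [gtPhi, inv_pow, Real.sq_sqrt hL.le]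
  rw [h1]
  rw [show -(1 / (2 * (-2 * Real.log s)⁻¹)) = Real.log s by
    field_simp]
  exact Real.exp_log hs.1

lemma gtPhi_inj : Set.InjOn gtPhi (Set.Ioo 0 1) := by
  intro a ha b hb hab
  have := gtPhi_leftInv ha
  rw [hab, gtPhi_leftInv hb] at this
  exact this.symm

lemma gtPhi_image : gtPhi '' (Set.Ioo 0 1) = Set.Ioi (0:ℝ) := by
  apply Set.Subset.antisymm
  · rintro _ ⟨s, hs, rfl⟩
    exact (gtPhi_facts hs).2.2
  · intro σ hσ
    have hσ0 : (0:ℝ) < σ := hσ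
    refine ⟨Real.exp (-(1 / (2 * σ ^ 2))), ⟨Real.exp_pos _, ?_⟩, ?_⟩
    · rw [Real.exp_lt_one_iff]
      have : 0 < 1 / (2 * σ ^ 2) := by positivity
      linarith
    · rw [gtPhi, Real.log_exp]
      rw [show -2 * -(1 / (2 * σ ^ 2)) = (σ ^ 2)⁻¹ by field_simp]
      rw [show (σ ^ 2)⁻¹ = (σ⁻¹) ^ 2 by rw [inv_pow]]
      rw [Real.sqrt_sq (by positivity)]
      simp

lemma gtL_continuousOn : ContinuousOn (fun s : ℝ => Real.sqrt (-2 * Real.log s)) (Set.Ioo 0 1) :=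
  Real.continuous_sqrt.comp_continuousOn
    (continuousOn_const.mul (Real.continuousOn_log.mono fun x hx => ne_of_gt hx.1))

lemma gtPhi_continuousOn : ContinuousOn gtPhi (Set.Ioo 0 1) := by
  apply ContinuousOn.inv₀ gtL_continuousOn
  intro s hs; exact ne_of_gt (gtPhi_facts hs).2.1

lemma gt_subst_identity (h : ℝ → ℝ) (z : ℝ) {s : ℝ} (hs : s ∈ Set.Ioo (0:ℝ) 1) :
    |gtPhi' s| * ((h (gtPhi s) / gtPhi s) * Real.exp (-z ^ 2 / (2 * (gtPhi s) ^ 2)))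
      = h (gtPhi s) / (s * (-2 * Real.log s)) * s ^ (z ^ 2 : ℝ) := by
  obtain ⟨hL, hsqL, hφ⟩ := gtPhi_facts hs
  have hsq : (gtPhi s) ^ 2 = (-2 * Real.log s)⁻¹ := by
    rw [gtPhi, inv_pow, Real.sq_sqrt hL.le]
  have hexp : Real.exp (-z ^ 2 / (2 * (gtPhi s) ^ 2)) = s ^ (z ^ 2 : ℝ) := by
    rw [Real.rpow_def_of_pos hs.1, hsq]
    congr 1
    have hlog : Real.log s ≠ 0 := by intro h0; rw [h0] at hL; simp at hL
    field_simp
  rw [hexp]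
  have habs : |gtPhi' s| = gtPhi' s := abs_of_pos (by
    rw [gtPhi']; exact div_pos one_pos (mul_pos (mul_pos hs.1 hL) hsqL))
  rw [habs, gtPhi', gtPhi]
  have h1 : s ≠ 0 := ne_of_gt hs.1
  have h2 : Real.sqrt (-2 * Real.log s) ≠ 0 := ne_of_gt hsqL
  have h3 : -2 * Real.log s ≠ 0 := ne_of_gt hL
  have hlogneg : Real.log s < 0 := by nlinarith
  have hsq2 : Real.sqrt (-(2 * Real.log s)) ≠ 0 := by
    rw [show -(2 * Real.log s) = -2 * Real.log s by ring]; exact h2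
  have h4 : -(s * (2 * Real.log s) * Real.sqrt (-(2 * Real.log s))) ≠ 0 := by
    apply neg_ne_zero.2
    exact mul_ne_zero (mul_ne_zero h1 (by intro h0; nlinarith [mul_eq_zero.1 h0])) hsq2
  have h5 : -(s * (2 * Real.log s)) ≠ 0 := by
    apply neg_ne_zero.2
    exact mul_ne_zero h1 (by intro h0; nlinarith [mul_eq_zero.1 h0])
  have h6 : s * (2 * Real.log s) * Real.sqrt (-(2 * Real.log s)) ≠ 0 :=
    mul_ne_zero (mul_ne_zero h1 (by intro h0; nlinarith [mul_eq_zero.1 h0])) hsq2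
  field_simp

lemma gt_integrand_contOn (f : ℝ → ℝ) (hfc : ContinuousOn f (Set.Ioi 0)) (z : ℝ) :
    ContinuousOn (fun σ => (f σ / σ) * Real.exp (-z ^ 2 / (2 * σ ^ 2))) (Set.Ioi 0) := by
  apply ContinuousOn.mul
  · exact hfc.div continuousOn_id fun σ hσ => ne_of_gt hσ
  · apply Real.continuous_exp.comp_continuousOn
    exact continuousOn_const.div (by fun_prop) fun σ hσ => by
      have h : (0:ℝ) < σ := hσ; positivity

lemma gt_integrand_integrable (f : ℝ → ℝ) (cf lf : ℝ) (hcf : 0 ≤ cf) (hlf : lf < 0)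
    (hfc : ContinuousOn f (Set.Ioi 0))
    (hf0 : f =O[nhdsWithin 0 (Set.Ioi 0)] fun σ : ℝ => Real.exp (cf / (2 * σ ^ 2)))
    (hfi : f =O[atTop] fun σ : ℝ => σ ^ lf)
    {z : ℝ} (hz : cf < z ^ 2) :
    IntegrableOn (fun σ => (f σ / σ) * Real.exp (-z ^ 2 / (2 * σ ^ 2))) (Set.Ioi 0) := by
  set F := fun σ => (f σ / σ) * Real.exp (-z ^ 2 / (2 * σ ^ 2)) with hF
  obtain ⟨C, hC⟩ := hf0.bound
  obtain ⟨ε, hεmem, hsub⟩ := mem_nhdsGT_iff_exists_Ioo_subset.1 hC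
  have hε : (0:ℝ) < ε := hεmem
  obtain ⟨C2, hC2⟩ := hfi.bound
  rw [Filter.eventually_atTop] at hC2
  obtain ⟨R, hR⟩ := hC2
  set C₀ := max C 0 with hC₀
  set C₂ := max C2 0 with hC₂
  have hC₀0 : 0 ≤ C₀ := le_max_right _ _
  have hC₂0 : 0 ≤ C₂ := le_max_right _ _
  set ε' := min ε 1 with hε'def
  set R' := max R 1 with hR'def
  have hε' : 0 < ε' := lt_min hε one_pos
  have hε'1 : ε' ≤ 1 := min_le_right _ _
  have hR' : (1:ℝ) ≤ R' := le_max_right _ _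
  have hR'0 : (0:ℝ) < R' := by linarith
  have hset : Set.Ioi (0:ℝ) = Set.Ioo 0 ε' ∪ (Set.Icc ε' R' ∪ Set.Ioi R') := by
    ext x
    simp only [Set.mem_Ioi, Set.mem_union, Set.mem_Ioo, Set.mem_Icc]
    constructor
    · intro hx
      rcases lt_or_ge x ε' with h | h
      · exact Or.inl ⟨hx, h⟩
      · rcases le_or_gt x R' with h2 | h2
        · exact Or.inr (Or.inl ⟨h, h2⟩)
        · exact Or.inr (Or.inr h2)
    · rintro (⟨h, _⟩ | ⟨h, _⟩ | h) <;> linarith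
  rw [hset]
  set a := z ^ 2 - cf with hadef
  have ha : 0 < a := by rw [hadef]; linarith
  refine IntegrableOn.union ?_ (IntegrableOn.union ?_ ?_)
  · -- near 0 : bounded
    refine Integrable.mono' (g := fun _ => C₀ * (2 * ε' / a)) ?_ ?_ ?_
    · exact integrableOn_const measure_Ioo_lt_top.ne
    · exact ((gt_integrand_contOn f hfc z).mono fun x hx =>
        hx.1).aestronglyMeasurable measurableSet_Ioo
    · filter_upwards [ae_restrict_mem measurableSet_Ioo] with σ hσ
      have hσ0 : 0 < σ := hσ.1
      have hσε : σ < ε := lt_of_lt_of_le hσ.2 (min_le_left _ _)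
      have hbf : ‖f σ‖ ≤ C₀ * Real.exp (cf / (2 * σ ^ 2)) := by
        have := hsub ⟨hσ0, hσε⟩
        calc ‖f σ‖ ≤ C * ‖Real.exp (cf / (2 * σ ^ 2))‖ := this
          _ ≤ C₀ * Real.exp (cf / (2 * σ ^ 2)) := by
              rw [Real.norm_eq_abs, abs_of_pos (Real.exp_pos _)]
              exact mul_le_mul_of_nonneg_right (le_max_left _ _) (Real.exp_pos _).le
      have hexpbd : Real.exp (-(a / (2 * σ ^ 2))) ≤ 2 * σ ^ 2 / a := by
        rw [Real.exp_neg]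
        rw [inv_le_comm₀ (Real.exp_pos _) (by positivity)]
        calc (2 * σ ^ 2 / a)⁻¹ = a / (2 * σ ^ 2) := by rw [inv_div]
          _ ≤ Real.exp (a / (2 * σ ^ 2)) := by
              have := Real.add_one_le_exp (a / (2 * σ ^ 2))
              linarith
      have hnorm : ‖F σ‖ = ‖f σ‖ / σ * Real.exp (-z ^ 2 / (2 * σ ^ 2)) := by
        rw [hF, Real.norm_eq_abs, abs_mul, abs_div, abs_of_pos hσ0,
          abs_of_pos (Real.exp_pos _), Real.norm_eq_abs]
      rw [hnorm]
      have hexpeq : Real.exp (cf / (2 * σ ^ 2)) * Real.exp (-z ^ 2 / (2 * σ ^ 2))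
          = Real.exp (-(a / (2 * σ ^ 2))) := by
        rw [← Real.exp_add]; congr 1; rw [hadef]; field_simp; ring
      calc ‖f σ‖ / σ * Real.exp (-z ^ 2 / (2 * σ ^ 2))
          ≤ (C₀ * Real.exp (cf / (2 * σ ^ 2))) / σ * Real.exp (-z ^ 2 / (2 * σ ^ 2)) := by
            gcongr
          _ = C₀ * (Real.exp (cf / (2 * σ ^ 2)) * Real.exp (-z ^ 2 / (2 * σ ^ 2))) / σ := by
            ring
          _ = C₀ * Real.exp (-(a / (2 * σ ^ 2))) / σ := by rw [hexpeq]
          _ ≤ C₀ * (2 * σ ^ 2 / a) / σ := by gcongr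
          _ = C₀ * (2 * σ / a) := by field_simp
          _ ≤ C₀ * (2 * ε' / a) := by gcongr; exact hσ.2.le
  · -- compact middle
    exact ((gt_integrand_contOn f hfc z).mono fun x hx => lt_of_lt_of_le hε' hx.1).integrableOn_Icc
  · -- tail
    refine Integrable.mono' (g := fun σ => C₂ * σ ^ (lf - 1)) ?_ ?_ ?_
    · exact (integrableOn_Ioi_rpow_of_lt (by linarith) hR'0).const_mul C₂
    · exact ((gt_integrand_contOn f hfc z).mono fun x hx =>
        lt_trans hR'0 hx).aestronglyMeasurable measurableSet_Ioi
    · filter_upwards [ae_restrict_mem measurableSet_Ioi] with σ hσ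
      have hσ0 : 0 < σ := lt_trans hR'0 hσ
      have hσR : R ≤ σ := le_trans (le_max_left _ _) (le_of_lt hσ)
      have hbf : ‖f σ‖ ≤ C₂ * σ ^ lf := by
        calc ‖f σ‖ ≤ C2 * ‖σ ^ lf‖ := hR σ hσR
          _ ≤ C₂ * σ ^ lf := by
              rw [Real.norm_eq_abs, abs_of_pos (Real.rpow_pos_of_pos hσ0 _)]
              exact mul_le_mul_of_nonneg_right (le_max_left _ _) (Real.rpow_pos_of_pos hσ0 _).le
      have hexple : Real.exp (-z ^ 2 / (2 * σ ^ 2)) ≤ 1 := by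
        rw [Real.exp_le_one_iff]
        apply div_nonpos_of_nonpos_of_nonneg (neg_nonpos.2 (sq_nonneg z)) (by positivity)
      have hnorm : ‖F σ‖ = ‖f σ‖ / σ * Real.exp (-z ^ 2 / (2 * σ ^ 2)) := by
        rw [hF, Real.norm_eq_abs, abs_mul, abs_div, abs_of_pos hσ0,
          abs_of_pos (Real.exp_pos _), Real.norm_eq_abs]
      rw [hnorm]
      calc ‖f σ‖ / σ * Real.exp (-z ^ 2 / (2 * σ ^ 2))
          ≤ (C₂ * σ ^ lf) / σ * 1 := by gcongr
          _ = C₂ * σ ^ (lf - 1) := by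
            rw [mul_one, Real.rpow_sub hσ0, Real.rpow_one, mul_div_assoc]

/-- **Uniqueness of the Gaussian-kernel transform.**
If `f, g` are continuous transformable functions on `(0,∞)` with constants `c_f, c_g`
(i.e. `O(exp(c/(2σ²)))` as `σ → 0⁺` and `O(σ^λ)`, `λ < 0`, as `σ → ∞`), and their
transforms agree for all real `z > √(max(c_f, c_g))`, then `f = g` on `(0,∞)`. -/
theorem gaussian_transform_uniqueness (f g : ℝ → ℝ) (cf cg lf lg : ℝ)
    (hcf : 0 ≤ cf) (hcg : 0 ≤ cg) (hlf : lf < 0) (hlg : lg < 0)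
    (hfc : ContinuousOn f (Set.Ioi 0)) (hgc : ContinuousOn g (Set.Ioi 0))
    (hf0 : f =O[nhdsWithin 0 (Set.Ioi 0)] fun σ : ℝ => Real.exp (cf / (2 * σ ^ 2)))
    (hg0 : g =O[nhdsWithin 0 (Set.Ioi 0)] fun σ : ℝ => Real.exp (cg / (2 * σ ^ 2)))
    (hfi : f =O[atTop] fun σ : ℝ => σ ^ lf)
    (hgi : g =O[atTop] fun σ : ℝ => σ ^ lg)
    (heq : ∀ z : ℝ, Real.sqrt (max cf cg) < z → gaussTransform f z = gaussTransform g z) :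
    ∀ σ : ℝ, 0 < σ → f σ = g σ := by
  intro σ₀ hσ₀
  set c := max cf cg with hc
  have hc0 : 0 ≤ c := le_max_of_le_left hcf
  set h := fun t => f t - g t with hh
  set k := fun (z : ℝ) (t : ℝ) => (h t / t) * Real.exp (-z ^ 2 / (2 * t ^ 2)) with hk
  -- integrability and vanishing of the difference transform
  have hconth : ContinuousOn h (Set.Ioi 0) := hfc.sub hgc
  have hint : ∀ z : ℝ, c < z ^ 2 → 0 < z →
      IntegrableOn (k z) (Set.Ioi 0) ∧ (∫ t in Set.Ioi 0, k z t) = 0 := by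
    intro z hz hzpos
    have hzf : cf < z ^ 2 := lt_of_le_of_lt (le_max_left _ _) hz
    have hzg : cg < z ^ 2 := lt_of_le_of_lt (le_max_right _ _) hz
    have hIf := gt_integrand_integrable f cf lf hcf hlf hfc hf0 hfi hzf
    have hIg := gt_integrand_integrable g cg lg hcg hlg hgc hg0 hgi hzg
    have hpt : k z = fun t => (f t / t) * Real.exp (-z ^ 2 / (2 * t ^ 2))
        - (g t / t) * Real.exp (-z ^ 2 / (2 * t ^ 2)) := by
      funext t; rw [hk, hh]; ring
    refine ⟨by rw [hpt]; exact hIf.sub hIg, ?_⟩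
    have hzsqrt : Real.sqrt c < z := by
      rw [show z = Real.sqrt (z ^ 2) by rw [Real.sqrt_sq hzpos.le]]
      exact Real.sqrt_lt_sqrt hc0 hz
    have := heq z hzsqrt
    rw [gaussTransform, gaussTransform] at this
    have hne : (1 / Real.sqrt (2 * π)) ≠ 0 := by
      have : 0 < Real.sqrt (2 * π) := Real.sqrt_pos.2 (by positivity)
      positivity
    have heqI : (∫ t in Set.Ioi (0:ℝ), (f t / t) * Real.exp (-z ^ 2 / (2 * t ^ 2)))
        = ∫ t in Set.Ioi (0:ℝ), (g t / t) * Real.exp (-z ^ 2 / (2 * t ^ 2)) :=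
      mul_left_cancel₀ hne this
    rw [hpt, integral_sub hIf hIg, heqI, sub_self]
  -- substitution to (0,1)
  have hderiv : ∀ s ∈ Set.Ioo (0:ℝ) 1, HasDerivWithinAt gtPhi (gtPhi' s) (Set.Ioo 0 1) s :=
    fun s hs => (gtPhi_hasDeriv hs).hasDerivWithinAt
  have hsubst : ∀ z : ℝ, (∫ t in Set.Ioi (0:ℝ), k z t)
      = ∫ s in Set.Ioo (0:ℝ) 1, |gtPhi' s| • k z (gtPhi s) := by
    intro z
    rw [← gtPhi_image, integral_image_eq_integral_abs_deriv_smul measurableSet_Ioo hderiv gtPhi_inj]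
  set ψ := fun s : ℝ => h (gtPhi s) / (s * (-2 * Real.log s)) * s ^ (c + 1 : ℝ) with hψ
  -- pointwise identity
  have hptw : ∀ (n : ℕ), ∀ s ∈ Set.Ioo (0:ℝ) 1,
      |gtPhi' s| • k (Real.sqrt (c + 1 + n)) (gtPhi s) = s ^ n * ψ s := by
    intro n s hs
    have hzn : (Real.sqrt (c + 1 + n)) ^ 2 = c + 1 + n :=
      Real.sq_sqrt (by positivity)
    rw [smul_eq_mul, hk]
    rw [gt_subst_identity h (Real.sqrt (c + 1 + n)) hs, hzn, hψ]
    rw [show (c + 1 + (n:ℝ)) = (c + 1) + (n:ℝ) by ring, Real.rpow_add hs.1,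
      Real.rpow_natCast]
    ring
  -- moments vanish
  have hmom : ∀ n : ℕ, ∫ s in Set.Ioo (0:ℝ) 1, s ^ n * ψ s = 0 := by
    intro n
    have hgt : c < (Real.sqrt (c + 1 + n)) ^ 2 := by
      rw [Real.sq_sqrt (by positivity)]
      have : (0:ℝ) ≤ n := Nat.cast_nonneg n
      linarith
    have hpos : 0 < Real.sqrt (c + 1 + n) := Real.sqrt_pos.2 (by positivity)
    rw [← setIntegral_congr_fun measurableSet_Ioo (hptw n), ← hsubst]
    exact (hint _ hgt hpos).2
  -- ψ is integrable on (0,1)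
  have hψint : IntegrableOn ψ (Set.Ioo 0 1) := by
    have hgt : c < (Real.sqrt (c + 1)) ^ 2 := by
      rw [Real.sq_sqrt (by positivity)]; linarith
    have hpos : 0 < Real.sqrt (c + 1) := Real.sqrt_pos.2 (by positivity)
    have hI : IntegrableOn (k (Real.sqrt (c + 1))) (gtPhi '' Set.Ioo 0 1) := by
      rw [gtPhi_image]; exact (hint _ hgt hpos).1
    have := (integrableOn_image_iff_integrableOn_abs_deriv_smul measurableSet_Ioo hderiv
      gtPhi_inj (k (Real.sqrt (c + 1)))).1 hI
    refine this.congr_fun (fun s hs => ?_) measurableSet_Ioo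
    have := hptw 0 s hs
    rw [Nat.cast_zero, add_zero] at this
    beta_reduce
    rw [this, pow_zero, one_mul]
  -- ψ is continuous on (0,1)
  have hmaps : ∀ s ∈ Set.Ioo (0:ℝ) 1, gtPhi s ∈ Set.Ioi (0:ℝ) := fun s hs => (gtPhi_facts hs).2.2
  have hψcont : ContinuousOn ψ (Set.Ioo 0 1) := by
    apply ContinuousOn.mul
    · apply ContinuousOn.div
      · exact hconth.comp gtPhi_continuousOn hmaps
      · exact continuousOn_id.mul (continuousOn_const.mul
          (Real.continuousOn_log.mono fun x hx => ne_of_gt hx.1))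
      · intro s hs
        have := (gtPhi_facts hs).1
        exact mul_ne_zero (ne_of_gt hs.1) (ne_of_gt this)
    · exact ContinuousOn.rpow_const continuousOn_id fun s hs => Or.inl (ne_of_gt hs.1)
  -- conclude ψ = 0 on (0,1), hence h = 0 on (0,∞)
  have hψ0 := moment_zero hψint hψcont hmom
  have hh0 : h σ₀ = 0 := by
    have hmem : σ₀ ∈ gtPhi '' Set.Ioo 0 1 := by rw [gtPhi_image]; exact hσ₀
    obtain ⟨s, hs, rfl⟩ := hmem
    have h0 := hψ0 s hs
    rw [hψ] at h0
    have hL := (gtPhi_facts hs).1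
    have hrp : (0:ℝ) < s ^ (c + 1 : ℝ) := Real.rpow_pos_of_pos hs.1 _
    have hden : s * (-2 * Real.log s) ≠ 0 := mul_ne_zero (ne_of_gt hs.1) (ne_of_gt hL)
    have := mul_eq_zero.1 h0
    rcases this with h1 | h1
    · exact (div_eq_zero_iff.1 h1).resolve_right hden
    · exact absurd h1 (ne_of_gt hrp)
  have hfg : f σ₀ - g σ₀ = 0 := by simpa [hh] using hh0
  linarith
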